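/- Let v: S → ℂ be a smooth map on an open Riemann surface satisfying, in local holomorphic coordinates z = s + it, the equation ∂_t v - i ∂_s v = γ(∂_s) + i γ(∂_t) for a real one-form γ with dγ ≤ 0 (with respect to the complex orientation). Then the real part p = re(v) satisfies Δp = -dγ(∂_s, ∂_t) ≥ 0, i.e., p is subharmonic. -/

import Mathlib

/-!
Splitting the perturbed Cauchy–Riemann equation into real and imaginary parts gives
`∂_t p + ∂_s q = γ₁` and `∂_t q - ∂_s p = γ₂` for `v = p + iq`. Differentiating the first in `t`
and the second in `s` and subtracting, the mixed derivatives of `q` cancel and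
`Δp = ∂_t γ₁ - ∂_s γ₂ = -dγ(∂_s, ∂_t)`.
-/

theorem HasDerivAt.complex_re {f : ℝ → ℂ} {f' : ℂ} {x : ℝ} (h : HasDerivAt f f' x) :
    HasDerivAt (fun x => (f x).re) f'.re x :=
  Complex.reCLM.hasFDerivAt.comp_hasDerivAt x h

theorem HasDerivAt.complex_im {f : ℝ → ℂ} {f' : ℂ} {x : ℝ} (h : HasDerivAt f f' x) :
    HasDerivAt (fun x => (f x).im) f'.im x :=
  Complex.imCLM.hasFDerivAt.comp_hasDerivAt x h

section PerturbedCauchyRiemann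

variable {vs vt vss vtt vst vts : ℝ → ℝ → ℂ} {γ1 γ2 g1t g2s : ℝ → ℝ → ℝ}

theorem perturbedCauchyRiemann_re
    (heq : ∀ s t, vt s t - Complex.I * vs s t = (γ1 s t : ℂ) + Complex.I * (γ2 s t : ℂ))
    (s t : ℝ) : (vt s t).re + (vs s t).im = γ1 s t := by
  simpa [sub_eq_add_neg] using congrArg Complex.re (heq s t)

theorem perturbedCauchyRiemann_im
    (heq : ∀ s t, vt s t - Complex.I * vs s t = (γ1 s t : ℂ) + Complex.I * (γ2 s t : ℂ))
    (s t : ℝ) : (vt s t).im - (vs s t).re = γ2 s t := by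
  simpa using congrArg Complex.im (heq s t)

theorem laplacian_re_eq_neg_curl
    (hvss : ∀ s t, HasDerivAt (fun s' => vs s' t) (vss s t) s)
    (hvtt : ∀ s t, HasDerivAt (fun t' => vt s t') (vtt s t) t)
    (hvst : ∀ s t, HasDerivAt (fun t' => vs s t') (vst s t) t)
    (hvts : ∀ s t, HasDerivAt (fun s' => vt s' t) (vts s t) s)
    (hcomm : ∀ s t, vst s t = vts s t)
    (hg1t : ∀ s t, HasDerivAt (fun t' => γ1 s t') (g1t s t) t)
    (hg2s : ∀ s t, HasDerivAt (fun s' => γ2 s' t) (g2s s t) s)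
    (heq : ∀ s t, vt s t - Complex.I * vs s t = (γ1 s t : ℂ) + Complex.I * (γ2 s t : ℂ))
    (s t : ℝ) : (vss s t).re + (vtt s t).re = -(g2s s t - g1t s t) := by
  have h_dt_re : (vtt s t).re + (vst s t).im = g1t s t := by
    have h : HasDerivAt (fun t' => (vt s t').re + (vs s t').im) _ t :=
      (hvtt s t).complex_re.add (hvst s t).complex_im
    simp only [perturbedCauchyRiemann_re heq] at h
    exact h.unique (hg1t s t)
  have h_ds_im : (vts s t).im - (vss s t).re = g2s s t := by
    have h : HasDerivAt (fun s' => (vt s' t).im - (vs s' t).re) _ s :=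
      (hvts s t).complex_im.sub (hvss s t).complex_re
    simp only [perturbedCauchyRiemann_im heq] at h
    exact h.unique (hg2s s t)
  rw [hcomm] at h_dt_re
  linarith

end PerturbedCauchyRiemann

theorem stmt_7_general
    (vs vt vss vtt vst vts : ℝ → ℝ → ℂ)
    (γ1 γ2 g1t g2s : ℝ → ℝ → ℝ)
    (hvss : ∀ s t, HasDerivAt (fun s' => vs s' t) (vss s t) s)
    (hvtt : ∀ s t, HasDerivAt (fun t' => vt s t') (vtt s t) t)
    (hvst : ∀ s t, HasDerivAt (fun t' => vs s t') (vst s t) t)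
    (hvts : ∀ s t, HasDerivAt (fun s' => vt s' t) (vts s t) s)
    (hcomm : ∀ s t, vst s t = vts s t)
    (hg1t : ∀ s t, HasDerivAt (fun t' => γ1 s t') (g1t s t) t)
    (hg2s : ∀ s t, HasDerivAt (fun s' => γ2 s' t) (g2s s t) s)
    (heq : ∀ s t, vt s t - Complex.I * vs s t = (γ1 s t : ℂ) + Complex.I * (γ2 s t : ℂ))
    (hdγ : ∀ s t, g2s s t - g1t s t ≤ 0) :
    ∀ s t, (vss s t).re + (vtt s t).re = -(g2s s t - g1t s t) ∧
      0 ≤ (vss s t).re + (vtt s t).re := by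
  intro s t
  have hΔ := laplacian_re_eq_neg_curl hvss hvtt hvst hvts hcomm hg1t hg2s heq s t
  exact ⟨hΔ, hΔ ▸ neg_nonneg.mpr (hdγ s t)⟩

/-- If `v : S → ℂ` satisfies the perturbed Cauchy–Riemann equation
`∂_t v - i ∂_s v = γ(∂_s) + i γ(∂_t)` in local holomorphic coordinates `z = s + it`,
for a real one-form `γ = γ1 ds + γ2 dt` with `dγ ≤ 0` (i.e. `∂_s γ2 - ∂_t γ1 ≤ 0`), then
`Δ re(v) = -dγ(∂_s, ∂_t) ≥ 0`: the real part of `v` is subharmonic. -/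
theorem stmt_7
    (v vs vt vss vtt vst vts : ℝ → ℝ → ℂ)
    (γ1 γ2 g1s g1t g2s g2t : ℝ → ℝ → ℝ)
    (hvs : ∀ s t, HasDerivAt (fun s' => v s' t) (vs s t) s)
    (hvt : ∀ s t, HasDerivAt (fun t' => v s t') (vt s t) t)
    (hvss : ∀ s t, HasDerivAt (fun s' => vs s' t) (vss s t) s)
    (hvtt : ∀ s t, HasDerivAt (fun t' => vt s t') (vtt s t) t)
    (hvst : ∀ s t, HasDerivAt (fun t' => vs s t') (vst s t) t)
    (hvts : ∀ s t, HasDerivAt (fun s' => vt s' t) (vts s t) s)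
    (hcomm : ∀ s t, vst s t = vts s t)
    (hg1s : ∀ s t, HasDerivAt (fun s' => γ1 s' t) (g1s s t) s)
    (hg1t : ∀ s t, HasDerivAt (fun t' => γ1 s t') (g1t s t) t)
    (hg2s : ∀ s t, HasDerivAt (fun s' => γ2 s' t) (g2s s t) s)
    (hg2t : ∀ s t, HasDerivAt (fun t' => γ2 s t') (g2t s t) t)
    (heq : ∀ s t, vt s t - Complex.I * vs s t = (γ1 s t : ℂ) + Complex.I * (γ2 s t : ℂ))
    (hdγ : ∀ s t, g2s s t - g1t s t ≤ 0) :
    ∀ s t, (vss s t).re + (vtt s t).re = -(g2s s t - g1t s t) ∧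
      0 ≤ (vss s t).re + (vtt s t).re :=
  stmt_7_general vs vt vss vtt vst vts γ1 γ2 g1t g2s hvss hvtt hvst hvts hcomm hg1t hg2s heq hdγ
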